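/- arXiv:2605.09102 — 5 statements merged into one kernel-verified Lean document; each statement's English description precedes it below -/
import Mathlib

section
/- Let α ∈ (-1,1) and β⁻, β⁺ > 0, and set D = β⁺(α+1) + β⁻(1-α). Suppose w : ℝ → ℝ is twice differentiable with w'' = 0 on (-1,α) and on (α,1), is continuous on [-1,α) and on (α,1] with w(-1) = 0 and w(1) = 0, the one-sided limits w⁻(α) = lim_{x→α⁻} w(x), w⁺(α) = lim_{x→α⁺} w(x), lim_{x→α⁻} w'(x) and lim_{x→α⁺} w'(x) all exist, and the flux continuity condition lim_{x→α⁻} β⁻·w'(x) = lim_{x→α⁺} β⁺·w'(x) holds. Then, with j = w⁻(α) − w⁺(α), one has w(x) = j·(β⁺/D)(x+1) for all x ∈ [-1,α) and w(x) = j·(β⁻/D)(x-1) for all x ∈ (α,1]. In particular, the solution space of the homogeneous interface problem is spanned by the unit-jump response, i.e. it is one-dimensional. -/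
/-!
On each subdomain `w'' = 0`, so `w'` is constant, equal to its one-sided limit at `α`, and `w`
is affine; the boundary conditions fix `w = w'(α⁻)·(x + 1)` on the left and
`w = w'(α⁺)·(x - 1)` on the right. The jump is then `j = w'(α⁻)(α + 1) + w'(α⁺)(1 - α)`,
and flux continuity `β⁻ w'(α⁻) = β⁺ w'(α⁺)` turns this into `β⁺ j = D·w'(α⁻)` and
`β⁻ j = D·w'(α⁺)`.
-/

open Set Filter Topology

theorem eq_of_tendsto_of_eqOn {X Y : Type*} [TopologicalSpace X] [TopologicalSpace Y] [T2Space Y]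
    {s : Set X} {f g : X → Y} {p : X} {L : Y} (hp : p ∈ closure s) (hfg : EqOn f g s)
    (hg : ContinuousAt g p) (hf : Tendsto f (𝓝[s] p) (𝓝 L)) : g p = L :=
  haveI := mem_closure_iff_nhdsWithin_neBot.1 hp
  tendsto_nhds_unique ((hg.tendsto.mono_left nhdsWithin_le_nhds).congr'
    (eventuallyEq_nhdsWithin_of_eqOn hfg.symm)) hf

theorem eqOn_of_hasDerivAt_const_of_tendsto {𝕜 G : Type*} [RCLike 𝕜] [NormedAddCommGroup G]
    [NormedSpace 𝕜 G] {s : Set 𝕜} {f : 𝕜 → G} {c L : G} {p : 𝕜} (hs : IsOpen s)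
    (hs' : IsPreconnected s) (hp : p ∈ closure s) (hf : ∀ x ∈ s, HasDerivAt f c x)
    (hL : Tendsto f (𝓝[s] p) (𝓝 L)) : EqOn f (fun x => L + (x - p) • c) s := by
  obtain ⟨a, ha⟩ := hs.exists_eq_add_of_deriv_eq (g := fun x => x • c) hs'
    (fun x hx => (hf x hx).differentiableAt.differentiableWithinAt)
    (differentiableOn_id.smul_const c)
    (fun x hx => by rw [(hf x hx).deriv, ((hasDerivAt_id' x).smul_const c).deriv, one_smul])
  have hLa : p • c + a = L :=
    eq_of_tendsto_of_eqOn (g := fun x => x • c + a) hp ha (by fun_prop) hL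
  intro x hx
  simp only [ha hx, ← hLa, sub_smul]
  abel

theorem eqOn_mul_sub_of_deriv_deriv_eq_zero {a b p q d : ℝ} {w : ℝ → ℝ} (hab : a < b)
    (hw : ∀ x ∈ Ioo a b, DifferentiableAt ℝ w x ∧ DifferentiableAt ℝ (deriv w) x ∧
      deriv (deriv w) x = 0)
    (hp : p ∈ Icc a b) (hd : Tendsto (deriv w) (𝓝[Ioo a b] p) (𝓝 d))
    (hq : q ∈ Icc a b) (hq₀ : Tendsto w (𝓝[Ioo a b] q) (𝓝 0)) :
    EqOn w (fun x => d * (x - q)) (Ioo a b) := by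
  rw [← closure_Ioo hab.ne] at hp hq
  have hderiv : EqOn (deriv w) (fun _ => d) (Ioo a b) := by
    have hconst := eqOn_of_hasDerivAt_const_of_tendsto isOpen_Ioo isPreconnected_Ioo hp
      (fun x hx => (hw x hx).2.2 ▸ (hw x hx).2.1.hasDerivAt) hd
    simpa using hconst
  have haffine := eqOn_of_hasDerivAt_const_of_tendsto isOpen_Ioo isPreconnected_Ioo hq
    (fun x hx => hderiv hx ▸ (hw x hx).1.hasDerivAt) hq₀
  intro x hx
  simpa [mul_comm] using haffine hx

/-- Any solution of the homogeneous interface problem (zero boundary values, harmonic on each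
subdomain, flux continuity) is the jump amplitude `j = w⁻(α) − w⁺(α)` times the explicit
unit-jump response; hence the solution space is one-dimensional, spanned by the unit-jump
response. -/
theorem stmt_1 (α βm βp : ℝ) (hα : α ∈ Ioo (-1 : ℝ) 1) (hβm : 0 < βm) (hβp : 0 < βp)
    (D : ℝ) (hD : D = βp * (α + 1) + βm * (1 - α))
    (w : ℝ → ℝ) (wm wp dm dp : ℝ)
    -- twice differentiable with vanishing second derivative on each subdomain
    (hdiff₁ : ∀ x ∈ Ioo (-1 : ℝ) α, DifferentiableAt ℝ w x ∧ DifferentiableAt ℝ (deriv w) x ∧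
        deriv (deriv w) x = 0)
    (hdiff₂ : ∀ x ∈ Ioo α (1 : ℝ), DifferentiableAt ℝ w x ∧ DifferentiableAt ℝ (deriv w) x ∧
        deriv (deriv w) x = 0)
    -- one-sided continuity up to the boundary and boundary values
    (hcont₁ : ContinuousOn w (Ico (-1 : ℝ) α))
    (hcont₂ : ContinuousOn w (Ioc α (1 : ℝ)))
    (hbc₁ : w (-1) = 0) (hbc₂ : w 1 = 0)
    -- existence of the one-sided limits of w and w' at α
    (hwm : Tendsto w (nhdsWithin α (Ioo (-1 : ℝ) α)) (nhds wm))
    (hwp : Tendsto w (nhdsWithin α (Ioo α (1 : ℝ))) (nhds wp))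
    (hdm : Tendsto (deriv w) (nhdsWithin α (Ioo (-1 : ℝ) α)) (nhds dm))
    (hdp : Tendsto (deriv w) (nhdsWithin α (Ioo α (1 : ℝ))) (nhds dp))
    -- flux continuity across the interface
    (hflux : βm * dm = βp * dp) :
    (∀ x ∈ Ico (-1 : ℝ) α, w x = (wm - wp) * ((βp / D) * (x + 1))) ∧
    (∀ x ∈ Ioc α (1 : ℝ), w x = (wm - wp) * ((βm / D) * (x - 1))) := by
  obtain ⟨hα₁, hα₂⟩ := hα
  have hleft : EqOn w (fun x => dm * (x + 1)) (Ioo (-1) α) := by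
    simpa using eqOn_mul_sub_of_deriv_deriv_eq_zero hα₁ hdiff₁ ⟨hα₁.le, le_rfl⟩ hdm
      ⟨le_rfl, hα₁.le⟩ (hbc₁ ▸ (hcont₁ _ ⟨le_rfl, hα₁⟩).mono Ioo_subset_Ico_self)
  have hright : EqOn w (fun x => dp * (x - 1)) (Ioo α 1) :=
    eqOn_mul_sub_of_deriv_deriv_eq_zero hα₂ hdiff₂ ⟨le_rfl, hα₂.le⟩ hdp
      ⟨hα₂.le, le_rfl⟩ (hbc₂ ▸ (hcont₂ _ ⟨hα₂, le_rfl⟩).mono Ioo_subset_Ioc_self)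
  have hwm' : dm * (α + 1) = wm := eq_of_tendsto_of_eqOn (g := fun x => dm * (x + 1))
    (by rw [closure_Ioo hα₁.ne]; exact ⟨hα₁.le, le_rfl⟩) hleft (by fun_prop) hwm
  have hwp' : dp * (α - 1) = wp := eq_of_tendsto_of_eqOn (g := fun x => dp * (x - 1))
    (by rw [closure_Ioo hα₂.ne]; exact ⟨le_rfl, hα₂.le⟩) hright (by fun_prop) hwp
  have hD₀ : D ≠ 0 := by rw [hD]; nlinarith
  have hdm' : dm * D = (wm - wp) * βp := by
    rw [hD, ← hwm', ← hwp']; linear_combination (1 - α) * hflux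
  have hdp' : dp * D = (wm - wp) * βm := by
    rw [hD, ← hwm', ← hwp']; linear_combination (-(1 + α)) * hflux
  constructor
  · rintro x ⟨hx₁, hx₂⟩
    rcases hx₁.eq_or_lt with rfl | hx₁
    · simp [hbc₁]
    · rw [hleft ⟨hx₁, hx₂⟩]; field_simp; linear_combination (x + 1) * hdm'
  · rintro x ⟨hx₁, hx₂⟩
    rcases hx₂.eq_or_lt with rfl | hx₂
    · simp [hbc₂]
    · rw [hright ⟨hx₁, hx₂⟩]; field_simp; linear_combination (x - 1) * hdp'
end

section
/- Let α ∈ (-1,1), β⁻, β⁺ > 0, f : ℝ → ℝ, and ξ, η ∈ ℝ. Suppose v and w are both solutions of the zero-jump interface problem: each is twice differentiable on (-1,α) and on (α,1) with β⁻·v''(x) = −f(x) on (-1,α) and β⁺·v''(x) = −f(x) on (α,1) (and the same for w), each is continuous on [-1,α) and on (α,1] with value ξ at −1 and η at 1, the one-sided limits at α of the function and of its derivative exist for each, each satisfies flux continuity lim_{x→α⁻} β⁻·(·)'(x) = lim_{x→α⁺} β⁺·(·)'(x), and each has zero jump: lim_{x→α⁺}(·) − lim_{x→α⁻}(·) = 0.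 Then v(x) = w(x) for all x ∈ [-1,α) ∪ (α,1]. -/
open Set Filter

lemma affine_left {a b : ℝ} (hab : a < b) (u : ℝ → ℝ)
    (hd : ∀ x ∈ Ioo a b, DifferentiableAt ℝ u x)
    (hd2 : ∀ x ∈ Ioo a b, DifferentiableAt ℝ (deriv u) x)
    (hz : ∀ x ∈ Ioo a b, deriv (deriv u) x = 0)
    (hc : ContinuousOn u (Ico a b)) :
    ∃ c, (∀ x ∈ Ioo a b, deriv u x = c) ∧ (∀ x ∈ Ico a b, u x = u a + c * (x - a)) := by
  have hconst : ∀ x ∈ Ioo a b, ∀ y ∈ Ioo a b, x < y → deriv u x = deriv u y := by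
    intro x hx y hy hxy
    have hsub : Icc x y ⊆ Ioo a b := Icc_subset_Ioo hx.1 hy.2
    have hcont : ContinuousOn (deriv u) (Icc x y) := fun z hz =>
      ((hd2 z (hsub hz)).continuousAt).continuousWithinAt
    have hdiff : DifferentiableOn ℝ (deriv u) (Ioo x y) := fun z hz =>
      (hd2 z (hsub (Ioo_subset_Icc_self hz))).differentiableWithinAt
    obtain ⟨c, hc', hce⟩ := exists_deriv_eq_slope (deriv u) hxy hcont hdiff
    have h0 : deriv (deriv u) c = 0 := hz c (hsub (Ioo_subset_Icc_self hc'))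
    rw [h0] at hce
    have hne : y - x ≠ 0 := sub_ne_zero.mpr hxy.ne'
    rw [eq_comm, div_eq_iff hne] at hce
    nlinarith [hce]
  set m := (a + b) / 2 with hm
  have hmI : m ∈ Ioo a b := ⟨by linarith, by linarith⟩
  refine ⟨deriv u m, ?_, ?_⟩
  · intro x hx
    rcases lt_trichotomy x m with h | h | h
    · exact hconst x hx m hmI h
    · rw [h]
    · exact (hconst m hmI x hx h).symm
  · intro x hx
    rcases eq_or_lt_of_le hx.1 with h | h
    · rw [← h]; ring
    have hxI : x ∈ Ioo a b := ⟨h, hx.2⟩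
    have hsub : Icc a x ⊆ Ico a b := Icc_subset_Ico_right hx.2
    have hcont : ContinuousOn u (Icc a x) := hc.mono hsub
    have hdiff : DifferentiableOn ℝ u (Ioo a x) := fun z hz =>
      (hd z ⟨hz.1, hz.2.trans hx.2⟩).differentiableWithinAt
    obtain ⟨c, hc', hce⟩ := exists_deriv_eq_slope u h hcont hdiff
    have hcm : deriv u c = deriv u m := by
      have hcI : c ∈ Ioo a b := ⟨hc'.1, hc'.2.trans hx.2⟩
      rcases lt_trichotomy c m with h' | h' | h'
      · exact hconst c hcI m hmI h'
      · rw [h']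
      · exact (hconst m hmI c hcI h').symm
    rw [hcm] at hce
    have hne : x - a ≠ 0 := sub_ne_zero.mpr h.ne'
    rw [eq_div_iff hne] at hce
    nlinarith [hce]

lemma affine_right {a b : ℝ} (hab : a < b) (u : ℝ → ℝ)
    (hd : ∀ x ∈ Ioo a b, DifferentiableAt ℝ u x)
    (hd2 : ∀ x ∈ Ioo a b, DifferentiableAt ℝ (deriv u) x)
    (hz : ∀ x ∈ Ioo a b, deriv (deriv u) x = 0)
    (hc : ContinuousOn u (Ioc a b)) :
    ∃ c, (∀ x ∈ Ioo a b, deriv u x = c) ∧ (∀ x ∈ Ioc a b, u x = u b + c * (x - b)) := by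
  have hconst : ∀ x ∈ Ioo a b, ∀ y ∈ Ioo a b, x < y → deriv u x = deriv u y := by
    intro x hx y hy hxy
    have hsub : Icc x y ⊆ Ioo a b := Icc_subset_Ioo hx.1 hy.2
    have hcont : ContinuousOn (deriv u) (Icc x y) := fun z hz =>
      ((hd2 z (hsub hz)).continuousAt).continuousWithinAt
    have hdiff : DifferentiableOn ℝ (deriv u) (Ioo x y) := fun z hz =>
      (hd2 z (hsub (Ioo_subset_Icc_self hz))).differentiableWithinAt
    obtain ⟨c, hc', hce⟩ := exists_deriv_eq_slope (deriv u) hxy hcont hdiff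
    have h0 : deriv (deriv u) c = 0 := hz c (hsub (Ioo_subset_Icc_self hc'))
    rw [h0] at hce
    have hne : y - x ≠ 0 := sub_ne_zero.mpr hxy.ne'
    rw [eq_comm, div_eq_iff hne] at hce
    nlinarith [hce]
  set m := (a + b) / 2 with hm
  have hmI : m ∈ Ioo a b := ⟨by linarith, by linarith⟩
  refine ⟨deriv u m, ?_, ?_⟩
  · intro x hx
    rcases lt_trichotomy x m with h | h | h
    · exact hconst x hx m hmI h
    · rw [h]
    · exact (hconst m hmI x hx h).symm
  · intro x hx
    rcases eq_or_lt_of_le hx.2 with h | h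
    · rw [h]; ring
    have hxI : x ∈ Ioo a b := ⟨hx.1, h⟩
    have hsub : Icc x b ⊆ Ioc a b := fun z hz => ⟨lt_of_lt_of_le hx.1 hz.1, hz.2⟩
    have hcont : ContinuousOn u (Icc x b) := hc.mono hsub
    have hdiff : DifferentiableOn ℝ u (Ioo x b) := fun z hz =>
      (hd z ⟨hx.1.trans hz.1, hz.2⟩).differentiableWithinAt
    obtain ⟨c, hc', hce⟩ := exists_deriv_eq_slope u h hcont hdiff
    have hcm : deriv u c = deriv u m := by
      have hcI : c ∈ Ioo a b := ⟨hx.1.trans hc'.1, hc'.2⟩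
      rcases lt_trichotomy c m with h' | h' | h'
      · exact hconst c hcI m hmI h'
      · rw [h']
      · exact (hconst m hmI c hcI h').symm
    rw [hcm] at hce
    have hne : b - x ≠ 0 := sub_ne_zero.mpr h.ne'
    rw [eq_div_iff hne] at hce
    nlinarith [hce]

/-- Uniqueness for the zero-jump interface problem: two solutions with the same data
coincide on `[-1,α) ∪ (α,1]`. -/
theorem stmt_2 (α βm βp : ℝ) (hα : α ∈ Ioo (-1 : ℝ) 1) (hβm : 0 < βm) (hβp : 0 < βp)
    (f : ℝ → ℝ) (ξ η : ℝ)
    (v w : ℝ → ℝ) (vm vp dvm dvp wm wp dwm dwp : ℝ)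
    -- v solves the interface problem
    (hvdiff₁ : ∀ x ∈ Ioo (-1 : ℝ) α, DifferentiableAt ℝ v x ∧ DifferentiableAt ℝ (deriv v) x ∧
        βm * deriv (deriv v) x = -f x)
    (hvdiff₂ : ∀ x ∈ Ioo α (1 : ℝ), DifferentiableAt ℝ v x ∧ DifferentiableAt ℝ (deriv v) x ∧
        βp * deriv (deriv v) x = -f x)
    (hvcont₁ : ContinuousOn v (Ico (-1 : ℝ) α))
    (hvcont₂ : ContinuousOn v (Ioc α (1 : ℝ)))
    (hvbc₁ : v (-1) = ξ) (hvbc₂ : v 1 = η)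
    (hvm : Tendsto v (nhdsWithin α (Ioo (-1 : ℝ) α)) (nhds vm))
    (hvp : Tendsto v (nhdsWithin α (Ioo α (1 : ℝ))) (nhds vp))
    (hdvm : Tendsto (deriv v) (nhdsWithin α (Ioo (-1 : ℝ) α)) (nhds dvm))
    (hdvp : Tendsto (deriv v) (nhdsWithin α (Ioo α (1 : ℝ))) (nhds dvp))
    (hvflux : βm * dvm = βp * dvp)
    (hvjump : vp - vm = 0)
    -- w solves the interface problem
    (hwdiff₁ : ∀ x ∈ Ioo (-1 : ℝ) α, DifferentiableAt ℝ w x ∧ DifferentiableAt ℝ (deriv w) x ∧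
        βm * deriv (deriv w) x = -f x)
    (hwdiff₂ : ∀ x ∈ Ioo α (1 : ℝ), DifferentiableAt ℝ w x ∧ DifferentiableAt ℝ (deriv w) x ∧
        βp * deriv (deriv w) x = -f x)
    (hwcont₁ : ContinuousOn w (Ico (-1 : ℝ) α))
    (hwcont₂ : ContinuousOn w (Ioc α (1 : ℝ)))
    (hwbc₁ : w (-1) = ξ) (hwbc₂ : w 1 = η)
    (hwm : Tendsto w (nhdsWithin α (Ioo (-1 : ℝ) α)) (nhds wm))
    (hwp : Tendsto w (nhdsWithin α (Ioo α (1 : ℝ))) (nhds wp))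
    (hdwm : Tendsto (deriv w) (nhdsWithin α (Ioo (-1 : ℝ) α)) (nhds dwm))
    (hdwp : Tendsto (deriv w) (nhdsWithin α (Ioo α (1 : ℝ))) (nhds dwp))
    (hwflux : βm * dwm = βp * dwp)
    (hwjump : wp - wm = 0) :
    ∀ x ∈ Ico (-1 : ℝ) α ∪ Ioc α (1 : ℝ), v x = w x := by
  obtain ⟨hα1, hα2⟩ := hα
  set g : ℝ → ℝ := fun y => v y - w y with hg
  -- pointwise facts on the left interval
  have hgd₁ : ∀ x ∈ Ioo (-1 : ℝ) α, DifferentiableAt ℝ g x := fun x hx =>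
    (hvdiff₁ x hx).1.sub (hwdiff₁ x hx).1
  have hEq₁ : ∀ x ∈ Ioo (-1 : ℝ) α, deriv g x = deriv v x - deriv w x := fun x hx =>
    deriv_sub (hvdiff₁ x hx).1 (hwdiff₁ x hx).1
  have hEqn₁ : ∀ x ∈ Ioo (-1 : ℝ) α, deriv g =ᶠ[nhds x] fun y => deriv v y - deriv w y := by
    intro x hx
    filter_upwards [isOpen_Ioo.mem_nhds hx] with y hy using hEq₁ y hy
  have hgd2₁ : ∀ x ∈ Ioo (-1 : ℝ) α, DifferentiableAt ℝ (deriv g) x := by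
    intro x hx
    exact ((hEqn₁ x hx).differentiableAt_iff).mpr ((hvdiff₁ x hx).2.1.sub (hwdiff₁ x hx).2.1)
  have hgz₁ : ∀ x ∈ Ioo (-1 : ℝ) α, deriv (deriv g) x = 0 := by
    intro x hx
    have h1 := (hvdiff₁ x hx).2.2
    have h2 := (hwdiff₁ x hx).2.2
    have : deriv (deriv g) x = deriv (deriv v) x - deriv (deriv w) x := by
      rw [(hEqn₁ x hx).deriv_eq]
      exact deriv_sub (hvdiff₁ x hx).2.1 (hwdiff₁ x hx).2.1
    rw [this]
    have hβ : βm ≠ 0 := ne_of_gt hβm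
    have h3 : βm * deriv (deriv v) x = βm * deriv (deriv w) x := by rw [h1, h2]
    have := mul_left_cancel₀ hβ h3
    linarith
  have hgc₁ : ContinuousOn g (Ico (-1 : ℝ) α) := hvcont₁.sub hwcont₁
  obtain ⟨c₁, hdc₁, haff₁⟩ := affine_left hα1 g hgd₁ hgd2₁ hgz₁ hgc₁
  have hga : g (-1) = 0 := by simp [hg, hvbc₁, hwbc₁]
  -- right interval
  have hgd₂ : ∀ x ∈ Ioo α (1 : ℝ), DifferentiableAt ℝ g x := fun x hx =>
    (hvdiff₂ x hx).1.sub (hwdiff₂ x hx).1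
  have hEq₂ : ∀ x ∈ Ioo α (1 : ℝ), deriv g x = deriv v x - deriv w x := fun x hx =>
    deriv_sub (hvdiff₂ x hx).1 (hwdiff₂ x hx).1
  have hEqn₂ : ∀ x ∈ Ioo α (1 : ℝ), deriv g =ᶠ[nhds x] fun y => deriv v y - deriv w y := by
    intro x hx
    filter_upwards [isOpen_Ioo.mem_nhds hx] with y hy using hEq₂ y hy
  have hgd2₂ : ∀ x ∈ Ioo α (1 : ℝ), DifferentiableAt ℝ (deriv g) x := by
    intro x hx
    exact ((hEqn₂ x hx).differentiableAt_iff).mpr ((hvdiff₂ x hx).2.1.sub (hwdiff₂ x hx).2.1)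
  have hgz₂ : ∀ x ∈ Ioo α (1 : ℝ), deriv (deriv g) x = 0 := by
    intro x hx
    have h1 := (hvdiff₂ x hx).2.2
    have h2 := (hwdiff₂ x hx).2.2
    have : deriv (deriv g) x = deriv (deriv v) x - deriv (deriv w) x := by
      rw [(hEqn₂ x hx).deriv_eq]
      exact deriv_sub (hvdiff₂ x hx).2.1 (hwdiff₂ x hx).2.1
    rw [this]
    have hβ : βp ≠ 0 := ne_of_gt hβp
    have h3 : βp * deriv (deriv v) x = βp * deriv (deriv w) x := by rw [h1, h2]
    have := mul_left_cancel₀ hβ h3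
    linarith
  have hgc₂ : ContinuousOn g (Ioc α (1 : ℝ)) := hvcont₂.sub hwcont₂
  obtain ⟨c₂, hdc₂, haff₂⟩ := affine_right hα2 g hgd₂ hgd2₂ hgz₂ hgc₂
  have hgb : g (1 : ℝ) = 0 := by simp [hg, hvbc₂, hwbc₂]
  -- limit identifications
  haveI hNB₁ : (nhdsWithin α (Ioo (-1 : ℝ) α)).NeBot := right_nhdsWithin_Ioo_neBot hα1
  haveI hNB₂ : (nhdsWithin α (Ioo α (1 : ℝ))).NeBot := left_nhdsWithin_Ioo_neBot hα2
  have hgm : vm - wm = c₁ * (α + 1) := by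
    have hT1 : Tendsto g (nhdsWithin α (Ioo (-1 : ℝ) α)) (nhds (vm - wm)) := hvm.sub hwm
    have hT2 : Tendsto g (nhdsWithin α (Ioo (-1 : ℝ) α)) (nhds (c₁ * (α + 1))) := by
      have hcont : Tendsto (fun y : ℝ => c₁ * (y + 1)) (nhds α) (nhds (c₁ * (α + 1))) :=
        (continuous_const.mul (continuous_id.add continuous_const)).tendsto α
      refine (hcont.mono_left nhdsWithin_le_nhds).congr' ?_
      filter_upwards [eventually_mem_nhdsWithin] with y hy
      have := haff₁ y (Ioo_subset_Ico_self hy)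
      rw [this, hga]; ring
    exact tendsto_nhds_unique hT1 hT2
  have hdgm : dvm - dwm = c₁ := by
    have hT1 : Tendsto (deriv g) (nhdsWithin α (Ioo (-1 : ℝ) α)) (nhds (dvm - dwm)) := by
      refine ((hdvm.sub hdwm)).congr' ?_
      filter_upwards [eventually_mem_nhdsWithin] with y hy using (hEq₁ y hy).symm
    have hT2 : Tendsto (deriv g) (nhdsWithin α (Ioo (-1 : ℝ) α)) (nhds c₁) := by
      refine tendsto_const_nhds.congr' ?_
      filter_upwards [eventually_mem_nhdsWithin] with y hy using (hdc₁ y hy).symm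
    exact tendsto_nhds_unique hT1 hT2
  have hgp : vp - wp = c₂ * (α - 1) := by
    have hT1 : Tendsto g (nhdsWithin α (Ioo α (1 : ℝ))) (nhds (vp - wp)) := hvp.sub hwp
    have hT2 : Tendsto g (nhdsWithin α (Ioo α (1 : ℝ))) (nhds (c₂ * (α - 1))) := by
      have hcont : Tendsto (fun y : ℝ => c₂ * (y - 1)) (nhds α) (nhds (c₂ * (α - 1))) :=
        (continuous_const.mul (continuous_id.sub continuous_const)).tendsto α
      refine (hcont.mono_left nhdsWithin_le_nhds).congr' ?_
      filter_upwards [eventually_mem_nhdsWithin] with y hy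
      have := haff₂ y (Ioo_subset_Ioc_self hy)
      rw [this, hgb]; ring
    exact tendsto_nhds_unique hT1 hT2
  have hdgp : dvp - dwp = c₂ := by
    have hT1 : Tendsto (deriv g) (nhdsWithin α (Ioo α (1 : ℝ))) (nhds (dvp - dwp)) := by
      refine ((hdvp.sub hdwp)).congr' ?_
      filter_upwards [eventually_mem_nhdsWithin] with y hy using (hEq₂ y hy).symm
    have hT2 : Tendsto (deriv g) (nhdsWithin α (Ioo α (1 : ℝ))) (nhds c₂) := by
      refine tendsto_const_nhds.congr' ?_
      filter_upwards [eventually_mem_nhdsWithin] with y hy using (hdc₂ y hy).symm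
    exact tendsto_nhds_unique hT1 hT2
  -- interface algebra
  have e1 : c₂ * (α - 1) = c₁ * (α + 1) := by
    have : vp - wp = vm - wm := by linarith [hvjump, hwjump]
    rw [hgp, hgm] at this; linarith
  have e2 : βm * c₁ = βp * c₂ := by
    rw [← hdgm, ← hdgp]; linarith [hvflux, hwflux]
  have key : c₁ * (βp * (α + 1) - βm * (α - 1)) = 0 := by
    linear_combination βp * e1.symm - (α - 1) * e2
  have hposf : 0 < βp * (α + 1) - βm * (α - 1) := by nlinarith
  have hc₁0 : c₁ = 0 := by
    rcases mul_eq_zero.mp key with h | h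
    · exact h
    · linarith
  have hc₂0 : c₂ = 0 := by
    have : βp * c₂ = 0 := by rw [← e2, hc₁0]; ring
    rcases mul_eq_zero.mp this with h | h
    · exact absurd h (ne_of_gt hβp)
    · exact h
  -- conclude
  intro x hx
  have : g x = 0 := by
    rcases hx with hx | hx
    · rw [haff₁ x hx, hga, hc₁0]; ring
    · rw [haff₂ x hx, hgb, hc₂0]; ring
  have : v x - w x = 0 := this
  linarith
end

section
/- (Decomposition, Proposition 2.1.) Let α ∈ (-1,1), β⁻, β⁺ > 0, f : ℝ → ℝ, and ξ, η ∈ ℝ. Suppose: (a) u is twice differentiable on (-1,α) and (α,1) with β⁻·u'' = −f on (-1,α) and β⁺·u'' = −f on (α,1), continuous on [-1,α) and (α,1] with u(-1) = ξ, u(1) = η, has one-sided limits of u and u' at α, and satisfies flux continuity lim_{x→α⁻} β⁻·u'(x) = lim_{x→α⁺} β⁺·u'(x); (b) u₀ satisfies the same differential equation, boundary values, existence of one-sided limits and flux continuity, and additionally has zero jump: u₀⁺(α) − u₀⁻(α) = 0; (c) u₁ is twice differentiable with u₁'' = 0 on (-1,α) and (α,1), continuous on [-1,α) and (α,1] with u₁(-1)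 = 0 and u₁(1) = 0, has one-sided limits of u₁ and u₁' at α, satisfies flux continuity, and has unit jump u₁⁺(α) − u₁⁻(α) = 1. Then, with s = u⁺(α) − u⁻(α), one has u(x) = u₀(x) + s·u₁(x) for all x ∈ [-1,α) ∪ (α,1]. -/
/-!
Put `s = u⁺(α) − u⁻(α)` and `w = u − u₀ − s·u₁`. On each subdomain `w'' = 0`, so `w` is affine
there; it vanishes at `±1`, has zero jump at `α` (since `[u₀]_α = 0` and `[u₁]_α = 1`) and
continuous flux. Writing `w = k (x + 1)` on the left and `w = l (x − 1)` on the right, the jump and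
flux conditions read `k (α + 1) = l (α − 1)` and `β⁻ k = β⁺ l`; as `α + 1 > 0 > α − 1` and
`β^± > 0`, this forces `k = l = 0`.
-/

open Set Filter Topology

theorem exists_eq_affine_of_hasDerivAt {𝕜 : Type*} [RCLike 𝕜] {s : Set 𝕜} (hs : IsOpen s)
    (hs' : IsPreconnected s) {w w' : 𝕜 → 𝕜} (hw : ∀ x ∈ s, HasDerivAt w (w' x) x)
    (hw' : ∀ x ∈ s, HasDerivAt w' 0 x) :
    ∃ k c, (∀ x ∈ s, w' x = k) ∧ ∀ x ∈ s, w x = k * x + c := by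
  obtain ⟨k, hk⟩ := hs.exists_is_const_of_deriv_eq_zero hs'
    (fun x hx => (hw' x hx).differentiableAt.differentiableWithinAt)
    (fun x hx => (hw' x hx).deriv)
  obtain ⟨c, hc⟩ := hs.exists_eq_add_of_deriv_eq hs'
    (fun x hx => (hw x hx).differentiableAt.differentiableWithinAt)
    (differentiable_id.const_mul k).differentiableOn
    (fun x hx => by simp [(hw x hx).deriv, hk x hx])
  exact ⟨k, c, hk, hc⟩

theorem eq_of_tendsto_nhdsWithin_of_eqOn {X Y : Type*} [TopologicalSpace X] [TopologicalSpace Y]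
    [T2Space Y] {s : Set X} {a : X} [(𝓝[s] a).NeBot] {w g : X → Y} {y : Y}
    (hw : Tendsto w (𝓝[s] a) (𝓝 y)) (hg : ContinuousAt g a) (hwg : EqOn w g s) : y = g a :=
  tendsto_nhds_unique hw <|
    (hg.tendsto.mono_left nhdsWithin_le_nhds).congr' (eventuallyEq_nhdsWithin_of_eqOn hwg).symm

theorem eq_zero_of_jump_of_flux {a b α βm βp k l : ℝ} (haα : a < α) (hαb : α < b)
    (hβm : 0 < βm) (hβp : 0 < βp) (hjump : k * (α - a) = l * (α - b))
    (hflux : βm * k = βp * l) : k = 0 ∧ l = 0 := by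
  have hpos : 0 < βp * (α - a) + βm * (b - α) := by positivity
  have hk : k * (βp * (α - a) + βm * (b - α)) = 0 := by
    linear_combination βp * hjump - (α - b) * hflux
  have hk0 : k = 0 := (mul_eq_zero.mp hk).resolve_right hpos.ne'
  refine ⟨hk0, ?_⟩
  have hl : βp * l = 0 := by rw [← hflux, hk0, mul_zero]
  exact (mul_eq_zero.mp hl).resolve_left hβp.ne'

theorem hasDerivAt_sub_sub_mul_of_eq_rhs {β : ℝ} (hβ : β ≠ 0) {f u u₀ u₁ : ℝ → ℝ} (s : ℝ)
    {x : ℝ}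
    (hu : DifferentiableAt ℝ u x ∧ DifferentiableAt ℝ (deriv u) x ∧ β * deriv (deriv u) x = -f x)
    (h₀ : DifferentiableAt ℝ u₀ x ∧ DifferentiableAt ℝ (deriv u₀) x ∧
      β * deriv (deriv u₀) x = -f x)
    (h₁ : DifferentiableAt ℝ u₁ x ∧ DifferentiableAt ℝ (deriv u₁) x ∧ deriv (deriv u₁) x = 0) :
    HasDerivAt (fun y => u y - u₀ y - s * u₁ y) (deriv u x - deriv u₀ x - s * deriv u₁ x) x ∧
      HasDerivAt (fun y => deriv u y - deriv u₀ y - s * deriv u₁ y) 0 x := by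
  refine ⟨(hu.1.hasDerivAt.sub h₀.1.hasDerivAt).sub (h₁.1.hasDerivAt.const_mul s), ?_⟩
  have hsame : deriv (deriv u) x = deriv (deriv u₀) x :=
    mul_left_cancel₀ hβ (hu.2.2.trans h₀.2.2.symm)
  exact ((hu.2.1.hasDerivAt.sub h₀.2.1.hasDerivAt).sub
    (h₁.2.1.hasDerivAt.const_mul s)).congr_deriv (by rw [hsame, h₁.2.2]; ring)

theorem eq_zero_of_interface_homogeneous {a b α βm βp : ℝ} (haα : a < α) (hαb : α < b)
    (hβm : 0 < βm) (hβp : 0 < βp) {w w' : ℝ → ℝ} {wm wp dm dp : ℝ}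
    (hw₁ : ∀ x ∈ Ioo a α, HasDerivAt w (w' x) x) (hw₂ : ∀ x ∈ Ioo α b, HasDerivAt w (w' x) x)
    (hw'₁ : ∀ x ∈ Ioo a α, HasDerivAt w' 0 x) (hw'₂ : ∀ x ∈ Ioo α b, HasDerivAt w' 0 x)
    (hcont₁ : ContinuousWithinAt w (Ioo a α) a) (hcont₂ : ContinuousWithinAt w (Ioo α b) b)
    (hbc₁ : w a = 0) (hbc₂ : w b = 0)
    (hwm : Tendsto w (𝓝[Ioo a α] α) (𝓝 wm)) (hwp : Tendsto w (𝓝[Ioo α b] α) (𝓝 wp))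
    (hdm : Tendsto w' (𝓝[Ioo a α] α) (𝓝 dm)) (hdp : Tendsto w' (𝓝[Ioo α b] α) (𝓝 dp))
    (hflux : βm * dm = βp * dp) (hjump : wp - wm = 0) :
    ∀ x ∈ Ico a α ∪ Ioc α b, w x = 0 := by
  have := left_nhdsWithin_Ioo_neBot haα
  have := right_nhdsWithin_Ioo_neBot haα
  have := left_nhdsWithin_Ioo_neBot hαb
  have := right_nhdsWithin_Ioo_neBot hαb
  obtain ⟨k, c, hk, hc⟩ := exists_eq_affine_of_hasDerivAt isOpen_Ioo isPreconnected_Ioo hw₁ hw'₁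
  obtain ⟨l, e, hl, he⟩ := exists_eq_affine_of_hasDerivAt isOpen_Ioo isPreconnected_Ioo hw₂ hw'₂
  have hca : w a = k * a + c := eq_of_tendsto_nhdsWithin_of_eqOn (g := fun x => k * x + c)
    hcont₁.tendsto (by fun_prop) hc
  have heb : w b = l * b + e := eq_of_tendsto_nhdsWithin_of_eqOn (g := fun x => l * x + e)
    hcont₂.tendsto (by fun_prop) he
  have hwmα : wm = k * α + c := eq_of_tendsto_nhdsWithin_of_eqOn (g := fun x => k * x + c)
    hwm (by fun_prop) hc
  have hwpα : wp = l * α + e := eq_of_tendsto_nhdsWithin_of_eqOn (g := fun x => l * x + e)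
    hwp (by fun_prop) he
  have hdmk : dm = k := eq_of_tendsto_nhdsWithin_of_eqOn (g := fun _ => k) hdm
    continuousAt_const hk
  have hdpl : dp = l := eq_of_tendsto_nhdsWithin_of_eqOn (g := fun _ => l) hdp
    continuousAt_const hl
  obtain ⟨rfl, rfl⟩ := eq_zero_of_jump_of_flux (k := k) (l := l) haα hαb hβm hβp
    (by linear_combination hwpα - hwmα + hca - heb - hjump + hbc₂ - hbc₁)
    (by rw [← hdmk, ← hdpl, hflux])
  rintro x (⟨hax, hxα⟩ | ⟨hαx, hxb⟩)
  · rcases hax.eq_or_lt with rfl | hax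
    · exact hbc₁
    · rw [hc x ⟨hax, hxα⟩]; linarith
  · rcases hxb.eq_or_lt with rfl | hxb
    · exact hbc₂
    · rw [he x ⟨hαx, hxb⟩]; linarith

/-- Decomposition (Proposition 2.1): the solution `u` of the interface problem equals the
zero-jump component `u₀` plus `s = u⁺(α) − u⁻(α)` times the unit-jump response `u₁`. -/
theorem stmt_3 (α βm βp : ℝ) (hα : α ∈ Ioo (-1 : ℝ) 1) (hβm : 0 < βm) (hβp : 0 < βp)
    (f : ℝ → ℝ) (ξ η : ℝ)
    (u u₀ u₁ : ℝ → ℝ)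
    (um up dum dup u0m u0p d0m d0p u1m u1p d1m d1p : ℝ)
    -- (a) u solves the interface problem
    (hudiff₁ : ∀ x ∈ Ioo (-1 : ℝ) α, DifferentiableAt ℝ u x ∧ DifferentiableAt ℝ (deriv u) x ∧
        βm * deriv (deriv u) x = -f x)
    (hudiff₂ : ∀ x ∈ Ioo α (1 : ℝ), DifferentiableAt ℝ u x ∧ DifferentiableAt ℝ (deriv u) x ∧
        βp * deriv (deriv u) x = -f x)
    (hucont₁ : ContinuousOn u (Ico (-1 : ℝ) α))
    (hucont₂ : ContinuousOn u (Ioc α (1 : ℝ)))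
    (hubc₁ : u (-1) = ξ) (hubc₂ : u 1 = η)
    (hum : Tendsto u (nhdsWithin α (Ioo (-1 : ℝ) α)) (nhds um))
    (hup : Tendsto u (nhdsWithin α (Ioo α (1 : ℝ))) (nhds up))
    (hdum : Tendsto (deriv u) (nhdsWithin α (Ioo (-1 : ℝ) α)) (nhds dum))
    (hdup : Tendsto (deriv u) (nhdsWithin α (Ioo α (1 : ℝ))) (nhds dup))
    (huflux : βm * dum = βp * dup)
    -- (b) u₀ solves the same problem with zero jump
    (h0diff₁ : ∀ x ∈ Ioo (-1 : ℝ) α, DifferentiableAt ℝ u₀ x ∧ DifferentiableAt ℝ (deriv u₀) x ∧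
        βm * deriv (deriv u₀) x = -f x)
    (h0diff₂ : ∀ x ∈ Ioo α (1 : ℝ), DifferentiableAt ℝ u₀ x ∧ DifferentiableAt ℝ (deriv u₀) x ∧
        βp * deriv (deriv u₀) x = -f x)
    (h0cont₁ : ContinuousOn u₀ (Ico (-1 : ℝ) α))
    (h0cont₂ : ContinuousOn u₀ (Ioc α (1 : ℝ)))
    (h0bc₁ : u₀ (-1) = ξ) (h0bc₂ : u₀ 1 = η)
    (h0m : Tendsto u₀ (nhdsWithin α (Ioo (-1 : ℝ) α)) (nhds u0m))
    (h0p : Tendsto u₀ (nhdsWithin α (Ioo α (1 : ℝ))) (nhds u0p))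
    (hd0m : Tendsto (deriv u₀) (nhdsWithin α (Ioo (-1 : ℝ) α)) (nhds d0m))
    (hd0p : Tendsto (deriv u₀) (nhdsWithin α (Ioo α (1 : ℝ))) (nhds d0p))
    (h0flux : βm * d0m = βp * d0p)
    (h0jump : u0p - u0m = 0)
    -- (c) u₁ is the unit-jump response
    (h1diff₁ : ∀ x ∈ Ioo (-1 : ℝ) α, DifferentiableAt ℝ u₁ x ∧ DifferentiableAt ℝ (deriv u₁) x ∧
        deriv (deriv u₁) x = 0)
    (h1diff₂ : ∀ x ∈ Ioo α (1 : ℝ), DifferentiableAt ℝ u₁ x ∧ DifferentiableAt ℝ (deriv u₁) x ∧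
        deriv (deriv u₁) x = 0)
    (h1cont₁ : ContinuousOn u₁ (Ico (-1 : ℝ) α))
    (h1cont₂ : ContinuousOn u₁ (Ioc α (1 : ℝ)))
    (h1bc₁ : u₁ (-1) = 0) (h1bc₂ : u₁ 1 = 0)
    (h1m : Tendsto u₁ (nhdsWithin α (Ioo (-1 : ℝ) α)) (nhds u1m))
    (h1p : Tendsto u₁ (nhdsWithin α (Ioo α (1 : ℝ))) (nhds u1p))
    (hd1m : Tendsto (deriv u₁) (nhdsWithin α (Ioo (-1 : ℝ) α)) (nhds d1m))
    (hd1p : Tendsto (deriv u₁) (nhdsWithin α (Ioo α (1 : ℝ))) (nhds d1p))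
    (h1flux : βm * d1m = βp * d1p)
    (h1jump : u1p - u1m = 1) :
    ∀ x ∈ Ico (-1 : ℝ) α ∪ Ioc α (1 : ℝ), u x = u₀ x + (up - um) * u₁ x := by
  obtain ⟨hα₁, hα₂⟩ := hα
  set s := up - um
  have hL := fun x (hx : x ∈ Ioo (-1 : ℝ) α) =>
    hasDerivAt_sub_sub_mul_of_eq_rhs hβm.ne' s (hudiff₁ x hx) (h0diff₁ x hx) (h1diff₁ x hx)
  have hR := fun x (hx : x ∈ Ioo α (1 : ℝ)) =>
    hasDerivAt_sub_sub_mul_of_eq_rhs hβp.ne' s (hudiff₂ x hx) (h0diff₂ x hx) (h1diff₂ x hx)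
  have hcont₁ : ContinuousOn (fun y => u y - u₀ y - s * u₁ y) (Ico (-1) α) :=
    (hucont₁.sub h0cont₁).sub (continuousOn_const.mul h1cont₁)
  have hcont₂ : ContinuousOn (fun y => u y - u₀ y - s * u₁ y) (Ioc α 1) :=
    (hucont₂.sub h0cont₂).sub (continuousOn_const.mul h1cont₂)
  intro x hx
  have hw := eq_zero_of_interface_homogeneous hα₁ hα₂ hβm hβp
    (fun x hx => (hL x hx).1) (fun x hx => (hR x hx).1)
    (fun x hx => (hL x hx).2) (fun x hx => (hR x hx).2)
    ((hcont₁ _ ⟨le_rfl, hα₁⟩).mono Ioo_subset_Ico_self)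
    ((hcont₂ _ ⟨hα₂, le_rfl⟩).mono Ioo_subset_Ioc_self)
    (by simp [hubc₁, h0bc₁, h1bc₁]) (by simp [hubc₂, h0bc₂, h1bc₂])
    ((hum.sub h0m).sub (h1m.const_mul s)) ((hup.sub h0p).sub (h1p.const_mul s))
    ((hdum.sub hd0m).sub (hd1m.const_mul s)) ((hdup.sub hd0p).sub (hd1p.const_mul s))
    (by linear_combination huflux - h0flux - s * h1flux)
    (by linear_combination -h0jump - s * h1jump) x hx
  linarith
end

section
/- (Reconstruction.) Let α ∈ (-1,1), β⁻, β⁺ > 0, f : ℝ → ℝ, ξ, η ∈ ℝ, and g : ℝ × ℝ → ℝ. Suppose u₀ is twice differentiable on (-1,α) and (α,1) with β⁻·u₀'' = −f on (-1,α) and β⁺·u₀'' = −f on (α,1), is continuous on [-1,α) and (α,1] with u₀(-1) = ξ and u₀(1) = η, has one-sided limits of u₀ and u₀' at α with zero jump u₀⁺(α) − u₀⁻(α) = 0, and satisfies flux continuity lim_{x→α⁻} β⁻·u₀'(x) = lim_{x→α⁺} β⁺·u₀'(x). Suppose u₁ is twice differentiable with u₁'' = 0 on (-1,α) and (α,1),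 continuous on [-1,α) and (α,1] with u₁(-1) = u₁(1) = 0, with one-sided limits of u₁ and u₁' at α, unit jump u₁⁺(α) − u₁⁻(α) = 1, and flux continuity. Suppose s ∈ ℝ satisfies s = g(u₀⁺(α) + s·u₁⁺(α), u₀⁻(α) + s·u₁⁻(α)). Then u := u₀ + s·u₁ solves the full nonlinear interface problem: β⁻·u'' = −f on (-1,α) and β⁺·u'' = −f on (α,1), u(-1) = ξ, u(1) = η, flux continuity lim_{x→α⁻} β⁻·u'(x) = lim_{x→α⁺} β⁺·u'(x), and the nonlinear jump condition u⁺(α) − u⁻(α) = g(u⁺(α), u⁻(α)). -/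
open Set Filter Topology

/-!
The interface problem is linear except for the jump condition. Adding `s • u₁` to `u₀` keeps the
subdomain equations (since `u₁'' = 0`), the boundary values (since `u₁(±1) = 0`) and flux
continuity (both fluxes are linear in the solution), while it shifts the jump by exactly `s`.
The scalar equation for `s` is then precisely the nonlinear jump condition for `u₀ + s • u₁`.
-/

section Superposition

variable {v w : ℝ → ℝ} {s : ℝ}

lemma deriv_add_const_mul_of_differentiableAt {x : ℝ} (hv : DifferentiableAt ℝ v x)
    (hw : DifferentiableAt ℝ w x) :
    deriv (fun y => v y + s * w y) x = deriv v x + s * deriv w x := by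
  rw [deriv_fun_add hv (hw.const_mul s), deriv_const_mul s hw]

lemma deriv_add_const_mul_eventuallyEq {l : Filter ℝ}
    (h : ∀ᶠ x in l, DifferentiableAt ℝ v x ∧ DifferentiableAt ℝ w x) :
    deriv (fun y => v y + s * w y) =ᶠ[l] fun y => deriv v y + s * deriv w y :=
  h.mono fun _ hx => deriv_add_const_mul_of_differentiableAt hx.1 hx.2

lemma tendsto_deriv_add_const_mul {l : Filter ℝ} {a b : ℝ}
    (h : ∀ᶠ x in l, DifferentiableAt ℝ v x ∧ DifferentiableAt ℝ w x)
    (hv : Tendsto (deriv v) l (𝓝 a)) (hw : Tendsto (deriv w) l (𝓝 b)) :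
    Tendsto (deriv fun y => v y + s * w y) l (𝓝 (a + s * b)) :=
  (hv.add (hw.const_mul s)).congr' (deriv_add_const_mul_eventuallyEq h).symm

lemma add_const_mul_solves_of_isOpen {U : Set ℝ} (hU : IsOpen U) {β : ℝ} {f : ℝ → ℝ}
    (hv : ∀ x ∈ U, DifferentiableAt ℝ v x ∧ DifferentiableAt ℝ (deriv v) x ∧
      β * deriv (deriv v) x = -f x)
    (hw : ∀ x ∈ U, DifferentiableAt ℝ w x ∧ DifferentiableAt ℝ (deriv w) x ∧
      deriv (deriv w) x = 0) :
    ∀ x ∈ U, DifferentiableAt ℝ (fun y => v y + s * w y) x ∧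
      DifferentiableAt ℝ (deriv fun y => v y + s * w y) x ∧
      β * deriv (deriv fun y => v y + s * w y) x = -f x := by
  intro x hx
  obtain ⟨hv₁, hv₂, hv_eq⟩ := hv x hx
  obtain ⟨hw₁, hw₂, hw_eq⟩ := hw x hx
  have hderiv : deriv (fun y => v y + s * w y) =ᶠ[𝓝 x] fun y => deriv v y + s * deriv w y :=
    deriv_add_const_mul_eventuallyEq <| eventually_of_mem (hU.mem_nhds hx) fun y hy =>
      ⟨(hv y hy).1, (hw y hy).1⟩
  refine ⟨hv₁.add (hw₁.const_mul s), (hv₂.add (hw₂.const_mul s)).congr_of_eventuallyEq hderiv, ?_⟩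
  rw [hderiv.deriv_eq, deriv_add_const_mul_of_differentiableAt hv₂ hw₂, hw_eq, mul_zero, add_zero,
    hv_eq]

end Superposition

theorem stmt_5_general (α βm βp : ℝ)
    (f : ℝ → ℝ) (ξ η : ℝ) (g : ℝ × ℝ → ℝ)
    (u₀ u₁ : ℝ → ℝ) (u0m u0p d0m d0p u1m u1p d1m d1p s : ℝ)
    -- u₀ solves the zero-jump problem
    (h0diff₁ : ∀ x ∈ Ioo (-1 : ℝ) α, DifferentiableAt ℝ u₀ x ∧ DifferentiableAt ℝ (deriv u₀) x ∧
        βm * deriv (deriv u₀) x = -f x)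
    (h0diff₂ : ∀ x ∈ Ioo α (1 : ℝ), DifferentiableAt ℝ u₀ x ∧ DifferentiableAt ℝ (deriv u₀) x ∧
        βp * deriv (deriv u₀) x = -f x)
    (h0bc₁ : u₀ (-1) = ξ) (h0bc₂ : u₀ 1 = η)
    (h0m : Tendsto u₀ (nhdsWithin α (Ioo (-1 : ℝ) α)) (nhds u0m))
    (h0p : Tendsto u₀ (nhdsWithin α (Ioo α (1 : ℝ))) (nhds u0p))
    (hd0m : Tendsto (deriv u₀) (nhdsWithin α (Ioo (-1 : ℝ) α)) (nhds d0m))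
    (hd0p : Tendsto (deriv u₀) (nhdsWithin α (Ioo α (1 : ℝ))) (nhds d0p))
    (h0jump : u0p - u0m = 0)
    (h0flux : βm * d0m = βp * d0p)
    -- u₁ is the unit-jump response
    (h1diff₁ : ∀ x ∈ Ioo (-1 : ℝ) α, DifferentiableAt ℝ u₁ x ∧ DifferentiableAt ℝ (deriv u₁) x ∧
        deriv (deriv u₁) x = 0)
    (h1diff₂ : ∀ x ∈ Ioo α (1 : ℝ), DifferentiableAt ℝ u₁ x ∧ DifferentiableAt ℝ (deriv u₁) x ∧
        deriv (deriv u₁) x = 0)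
    (h1bc₁ : u₁ (-1) = 0) (h1bc₂ : u₁ 1 = 0)
    (h1m : Tendsto u₁ (nhdsWithin α (Ioo (-1 : ℝ) α)) (nhds u1m))
    (h1p : Tendsto u₁ (nhdsWithin α (Ioo α (1 : ℝ))) (nhds u1p))
    (hd1m : Tendsto (deriv u₁) (nhdsWithin α (Ioo (-1 : ℝ) α)) (nhds d1m))
    (hd1p : Tendsto (deriv u₁) (nhdsWithin α (Ioo α (1 : ℝ))) (nhds d1p))
    (h1jump : u1p - u1m = 1)
    (h1flux : βm * d1m = βp * d1p)
    -- s solves the reduced scalar interface equation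
    (hs : s = g (u0p + s * u1p, u0m + s * u1m))
    -- the reconstructed solution
    (u : ℝ → ℝ) (hu : ∀ x, u x = u₀ x + s * u₁ x) :
    -- u solves the differential equation in each subdomain
    (∀ x ∈ Ioo (-1 : ℝ) α, DifferentiableAt ℝ u x ∧ DifferentiableAt ℝ (deriv u) x ∧
        βm * deriv (deriv u) x = -f x) ∧
    (∀ x ∈ Ioo α (1 : ℝ), DifferentiableAt ℝ u x ∧ DifferentiableAt ℝ (deriv u) x ∧
        βp * deriv (deriv u) x = -f x) ∧
    -- boundary conditions
    (u (-1) = ξ ∧ u 1 = η) ∧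
    -- flux continuity at α
    (∃ F : ℝ,
      Tendsto (fun x => βm * deriv u x) (nhdsWithin α (Ioo (-1 : ℝ) α)) (nhds F) ∧
      Tendsto (fun x => βp * deriv u x) (nhdsWithin α (Ioo α (1 : ℝ))) (nhds F)) ∧
    -- nonlinear jump condition
    (∃ um up : ℝ,
      Tendsto u (nhdsWithin α (Ioo (-1 : ℝ) α)) (nhds um) ∧
      Tendsto u (nhdsWithin α (Ioo α (1 : ℝ))) (nhds up) ∧
      up - um = g (up, um)) := by
  obtain rfl : u = fun y => u₀ y + s * u₁ y := funext hu
  have hdiff_left : ∀ᶠ x in 𝓝[Ioo (-1) α] α, DifferentiableAt ℝ u₀ x ∧ DifferentiableAt ℝ u₁ x :=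
    eventually_mem_nhdsWithin.mono fun x hx => ⟨(h0diff₁ x hx).1, (h1diff₁ x hx).1⟩
  have hdiff_right : ∀ᶠ x in 𝓝[Ioo α 1] α, DifferentiableAt ℝ u₀ x ∧ DifferentiableAt ℝ u₁ x :=
    eventually_mem_nhdsWithin.mono fun x hx => ⟨(h0diff₂ x hx).1, (h1diff₂ x hx).1⟩
  have hflux : βp * (d0p + s * d1p) = βm * (d0m + s * d1m) := by
    linear_combination -h0flux - s * h1flux
  have hjump : (u0p + s * u1p) - (u0m + s * u1m) = s := by
    linear_combination h0jump + s * h1jump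
  refine ⟨add_const_mul_solves_of_isOpen isOpen_Ioo h0diff₁ h1diff₁,
    add_const_mul_solves_of_isOpen isOpen_Ioo h0diff₂ h1diff₂,
    ⟨by simp [h0bc₁, h1bc₁], by simp [h0bc₂, h1bc₂]⟩,
    ⟨βm * (d0m + s * d1m), ?_, ?_⟩,
    ⟨u0m + s * u1m, u0p + s * u1p, h0m.add (h1m.const_mul s), h0p.add (h1p.const_mul s), ?_⟩⟩
  · exact (tendsto_deriv_add_const_mul hdiff_left hd0m hd1m).const_mul βm
  · exact hflux ▸ (tendsto_deriv_add_const_mul hdiff_right hd0p hd1p).const_mul βp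
  · rwa [hjump]

/-- Reconstruction: if `u₀` solves the zero-jump problem, `u₁` is the unit-jump response, and
`s` solves the reduced scalar equation, then `u = u₀ + s·u₁` solves the full nonlinear
interface problem. -/
theorem stmt_5 (α βm βp : ℝ) (hα : α ∈ Ioo (-1 : ℝ) 1) (hβm : 0 < βm) (hβp : 0 < βp)
    (f : ℝ → ℝ) (ξ η : ℝ) (g : ℝ × ℝ → ℝ)
    (u₀ u₁ : ℝ → ℝ) (u0m u0p d0m d0p u1m u1p d1m d1p s : ℝ)
    -- u₀ solves the zero-jump problem
    (h0diff₁ : ∀ x ∈ Ioo (-1 : ℝ) α, DifferentiableAt ℝ u₀ x ∧ DifferentiableAt ℝ (deriv u₀) x ∧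
        βm * deriv (deriv u₀) x = -f x)
    (h0diff₂ : ∀ x ∈ Ioo α (1 : ℝ), DifferentiableAt ℝ u₀ x ∧ DifferentiableAt ℝ (deriv u₀) x ∧
        βp * deriv (deriv u₀) x = -f x)
    (h0cont₁ : ContinuousOn u₀ (Ico (-1 : ℝ) α))
    (h0cont₂ : ContinuousOn u₀ (Ioc α (1 : ℝ)))
    (h0bc₁ : u₀ (-1) = ξ) (h0bc₂ : u₀ 1 = η)
    (h0m : Tendsto u₀ (nhdsWithin α (Ioo (-1 : ℝ) α)) (nhds u0m))
    (h0p : Tendsto u₀ (nhdsWithin α (Ioo α (1 : ℝ))) (nhds u0p))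
    (hd0m : Tendsto (deriv u₀) (nhdsWithin α (Ioo (-1 : ℝ) α)) (nhds d0m))
    (hd0p : Tendsto (deriv u₀) (nhdsWithin α (Ioo α (1 : ℝ))) (nhds d0p))
    (h0jump : u0p - u0m = 0)
    (h0flux : βm * d0m = βp * d0p)
    -- u₁ is the unit-jump response
    (h1diff₁ : ∀ x ∈ Ioo (-1 : ℝ) α, DifferentiableAt ℝ u₁ x ∧ DifferentiableAt ℝ (deriv u₁) x ∧
        deriv (deriv u₁) x = 0)
    (h1diff₂ : ∀ x ∈ Ioo α (1 : ℝ), DifferentiableAt ℝ u₁ x ∧ DifferentiableAt ℝ (deriv u₁) x ∧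
        deriv (deriv u₁) x = 0)
    (h1cont₁ : ContinuousOn u₁ (Ico (-1 : ℝ) α))
    (h1cont₂ : ContinuousOn u₁ (Ioc α (1 : ℝ)))
    (h1bc₁ : u₁ (-1) = 0) (h1bc₂ : u₁ 1 = 0)
    (h1m : Tendsto u₁ (nhdsWithin α (Ioo (-1 : ℝ) α)) (nhds u1m))
    (h1p : Tendsto u₁ (nhdsWithin α (Ioo α (1 : ℝ))) (nhds u1p))
    (hd1m : Tendsto (deriv u₁) (nhdsWithin α (Ioo (-1 : ℝ) α)) (nhds d1m))
    (hd1p : Tendsto (deriv u₁) (nhdsWithin α (Ioo α (1 : ℝ))) (nhds d1p))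
    (h1jump : u1p - u1m = 1)
    (h1flux : βm * d1m = βp * d1p)
    -- s solves the reduced scalar interface equation
    (hs : s = g (u0p + s * u1p, u0m + s * u1m))
    -- the reconstructed solution
    (u : ℝ → ℝ) (hu : ∀ x, u x = u₀ x + s * u₁ x) :
    -- u solves the differential equation in each subdomain
    (∀ x ∈ Ioo (-1 : ℝ) α, DifferentiableAt ℝ u x ∧ DifferentiableAt ℝ (deriv u) x ∧
        βm * deriv (deriv u) x = -f x) ∧
    (∀ x ∈ Ioo α (1 : ℝ), DifferentiableAt ℝ u x ∧ DifferentiableAt ℝ (deriv u) x ∧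
        βp * deriv (deriv u) x = -f x) ∧
    -- boundary conditions
    (u (-1) = ξ ∧ u 1 = η) ∧
    -- flux continuity at α
    (∃ F : ℝ,
      Tendsto (fun x => βm * deriv u x) (nhdsWithin α (Ioo (-1 : ℝ) α)) (nhds F) ∧
      Tendsto (fun x => βp * deriv u x) (nhdsWithin α (Ioo α (1 : ℝ))) (nhds F)) ∧
    -- nonlinear jump condition
    (∃ um up : ℝ,
      Tendsto u (nhdsWithin α (Ioo (-1 : ℝ) α)) (nhds um) ∧
      Tendsto u (nhdsWithin α (Ioo α (1 : ℝ))) (nhds up) ∧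
      up - um = g (up, um)) :=
  stmt_5_general α βm βp f ξ η g u₀ u₁ u0m u0p d0m d0p u1m u1p d1m d1p s h0diff₁ h0diff₂ h0bc₁ h0bc₂
    h0m h0p hd0m hd0p h0jump h0flux h1diff₁ h1diff₂ h1bc₁ h1bc₂ h1m h1p hd1m hd1p h1jump h1flux hs u
    hu
end

section
/- (Uniqueness of the unit-jump response.) Let α ∈ (-1,1) and β⁻, β⁺ > 0, and set D = β⁺(α+1) + β⁻(1-α). Suppose v : ℝ → ℝ is twice differentiable with v'' = 0 on (-1,α) and on (α,1), continuous on [-1,α) and on (α,1] with v(-1) = 0 and v(1) = 0, the one-sided limits of v and v' at α exist, v satisfies flux continuity lim_{x→α⁻} β⁻·v'(x) = lim_{x→α⁺} β⁺·v'(x), and v has unit jump lim_{x→α⁻} v(x) − lim_{x→α⁺} v(x) = 1. Then v(x) = (β⁺/D)(x+1) for all x ∈ [-1,α) and v(x) = (β⁻/D)(x-1) for all x ∈ (α,1]; i.e., v coincides with the explicit unit-jump response of the operator on [-1,α) ∪ (α,1]. -/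
/-!
On each subdomain `v'' = 0` makes `v` affine, and the boundary conditions fix the intercepts, so
`v` is determined by its two slopes. Flux continuity and the unit jump are then a 2×2 linear system
for the slopes whose determinant is `-D`.
-/

open Set Filter Topology

theorem IsOpen.exists_eqOn_affine_of_deriv_deriv_eq_zero {𝕜 : Type*} [RCLike 𝕜] {s : Set 𝕜}
    {f : 𝕜 → 𝕜} (hs : IsOpen s) (hs' : IsPreconnected s) (hf : DifferentiableOn 𝕜 f s)
    (hf' : DifferentiableOn 𝕜 (deriv f) s) (hf'' : s.EqOn (deriv (deriv f)) 0) :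
    ∃ a b : 𝕜, s.EqOn (deriv f) (fun _ ↦ a) ∧ s.EqOn f (fun x ↦ a * x + b) := by
  obtain ⟨a, ha⟩ := hs.exists_is_const_of_deriv_eq_zero hs' hf' hf''
  have hlin : s.EqOn (deriv f) (deriv fun x ↦ a * x) := fun x hx ↦ by simp [ha x hx]
  obtain ⟨b, hb⟩ := hs.exists_eq_add_of_deriv_eq hs' hf (by fun_prop) hlin
  exact ⟨a, b, ha, hb⟩

theorem exists_eqOn_affine_Ioo {f : ℝ → ℝ} {p q : ℝ}
    (h : ∀ x ∈ Ioo p q, DifferentiableAt ℝ f x ∧ DifferentiableAt ℝ (deriv f) x ∧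
      deriv (deriv f) x = 0) :
    ∃ a b : ℝ, (Ioo p q).EqOn (deriv f) (fun _ ↦ a) ∧ (Ioo p q).EqOn f (fun x ↦ a * x + b) :=
  isOpen_Ioo.exists_eqOn_affine_of_deriv_deriv_eq_zero isPreconnected_Ioo
    (fun x hx ↦ (h x hx).1.differentiableWithinAt)
    (fun x hx ↦ (h x hx).2.1.differentiableWithinAt) (fun x hx ↦ (h x hx).2.2)

theorem eq_of_tendsto_nhdsWithin_of_eqOn_s12 {X Y : Type*} [TopologicalSpace X] [TopologicalSpace Y]
    [T2Space Y] {f g : X → Y} {s : Set X} {x : X} {y : Y} (hx : x ∈ closure s)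
    (hfg : s.EqOn f g) (hg : ContinuousWithinAt g s x) (hf : Tendsto f (𝓝[s] x) (𝓝 y)) :
    y = g x :=
  haveI := mem_closure_iff_nhdsWithin_neBot.mp hx
  tendsto_nhds_unique hf (hg.tendsto.congr' (eventuallyEq_nhdsWithin_of_eqOn hfg).symm)

theorem unit_jump_slopes {α βm βp a c : ℝ} (hβp : βp ≠ 0) (hflux : βm * a = βp * c)
    (hjump : a * (α + 1) + c * (1 - α) = 1) :
    a = βp / (βp * (α + 1) + βm * (1 - α)) ∧ c = βm / (βp * (α + 1) + βm * (1 - α)) := by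
  have haD : a * (βp * (α + 1) + βm * (1 - α)) = βp := by
    linear_combination βp * hjump + (1 - α) * hflux
  have hcD : c * (βp * (α + 1) + βm * (1 - α)) = βm := by
    linear_combination βm * hjump - (α + 1) * hflux
  have hD : βp * (α + 1) + βm * (1 - α) ≠ 0 := by
    rintro hD
    rw [hD, mul_zero] at haD
    exact hβp haD.symm
  exact ⟨eq_div_of_mul_eq hD haD, eq_div_of_mul_eq hD hcD⟩

theorem stmt_12_general (α βm βp : ℝ) (hα : α ∈ Ioo (-1 : ℝ) 1) (hβp : 0 < βp)
    (D : ℝ) (hD : D = βp * (α + 1) + βm * (1 - α))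
    (v : ℝ → ℝ) (vm vp dm dp : ℝ)
    (hdiff₁ : ∀ x ∈ Ioo (-1 : ℝ) α, DifferentiableAt ℝ v x ∧ DifferentiableAt ℝ (deriv v) x ∧
        deriv (deriv v) x = 0)
    (hdiff₂ : ∀ x ∈ Ioo α (1 : ℝ), DifferentiableAt ℝ v x ∧ DifferentiableAt ℝ (deriv v) x ∧
        deriv (deriv v) x = 0)
    (hcont₁ : ContinuousOn v (Ico (-1 : ℝ) α))
    (hcont₂ : ContinuousOn v (Ioc α (1 : ℝ)))
    (hbc₁ : v (-1) = 0) (hbc₂ : v 1 = 0)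
    (hvm : Tendsto v (nhdsWithin α (Ioo (-1 : ℝ) α)) (nhds vm))
    (hvp : Tendsto v (nhdsWithin α (Ioo α (1 : ℝ))) (nhds vp))
    (hdm : Tendsto (deriv v) (nhdsWithin α (Ioo (-1 : ℝ) α)) (nhds dm))
    (hdp : Tendsto (deriv v) (nhdsWithin α (Ioo α (1 : ℝ))) (nhds dp))
    (hflux : βm * dm = βp * dp)
    (hjump : vm - vp = 1) :
    (∀ x ∈ Ico (-1 : ℝ) α, v x = (βp / D) * (x + 1)) ∧
    (∀ x ∈ Ioc α (1 : ℝ), v x = (βm / D) * (x - 1)) := by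
  obtain ⟨hα₁, hα₂⟩ := hα
  have hcl₁ : Icc (-1) α ⊆ closure (Ioo (-1) α) := (closure_Ioo hα₁.ne).ge
  have hcl₂ : Icc α 1 ⊆ closure (Ioo α 1) := (closure_Ioo hα₂.ne).ge
  obtain ⟨a, b, hda, hvab⟩ := exists_eqOn_affine_Ioo hdiff₁
  obtain ⟨c, d, hdc, hvcd⟩ := exists_eqOn_affine_Ioo hdiff₂
  have hdm_eq : dm = a := eq_of_tendsto_nhdsWithin_of_eqOn_s12 (hcl₁ (right_mem_Icc.2 hα₁.le))
    hda continuousWithinAt_const hdm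
  have hdp_eq : dp = c := eq_of_tendsto_nhdsWithin_of_eqOn_s12 (hcl₂ (left_mem_Icc.2 hα₂.le))
    hdc continuousWithinAt_const hdp
  have hvm_eq : vm = a * α + b := eq_of_tendsto_nhdsWithin_of_eqOn_s12 (x := α)
    (hcl₁ (right_mem_Icc.2 hα₁.le)) hvab (by fun_prop) hvm
  have hvp_eq : vp = c * α + d := eq_of_tendsto_nhdsWithin_of_eqOn_s12 (x := α)
    (hcl₂ (left_mem_Icc.2 hα₂.le)) hvcd (by fun_prop) hvp
  have hb : v (-1) = a * (-1) + b := eq_of_tendsto_nhdsWithin_of_eqOn_s12 (x := -1)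
    (hcl₁ (left_mem_Icc.2 hα₁.le)) hvab (by fun_prop)
    ((hcont₁ (-1) ⟨le_rfl, hα₁⟩).mono Ioo_subset_Ico_self).tendsto
  have hd : v 1 = c * 1 + d := eq_of_tendsto_nhdsWithin_of_eqOn_s12 (x := 1)
    (hcl₂ (right_mem_Icc.2 hα₂.le)) hvcd (by fun_prop)
    ((hcont₂ 1 ⟨hα₂, le_rfl⟩).mono Ioo_subset_Ioc_self).tendsto
  rw [hdm_eq, hdp_eq] at hflux
  obtain ⟨ha, hc⟩ := unit_jump_slopes (α := α) hβp.ne' hflux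
    (by linear_combination hjump - hvm_eq + hvp_eq + hb - hbc₁ + hbc₂ - hd)
  rw [← hD] at ha hc
  rw [← Ioo_insert_left hα₁, ← Ioo_insert_right hα₂, forall_mem_insert, forall_mem_insert]
  refine ⟨⟨by simp [hbc₁], fun x hx ↦ ?_⟩, ⟨by simp [hbc₂], fun x hx ↦ ?_⟩⟩
  · rw [hvab hx, ← ha]
    linear_combination hbc₁ - hb
  · rw [hvcd hx, ← hc]
    linear_combination hbc₂ - hd

/-- Uniqueness of the unit-jump response: any solution of the homogeneous interface problem
with unit jump coincides with the explicit piecewise-linear unit-jump response. -/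
theorem stmt_12 (α βm βp : ℝ) (hα : α ∈ Ioo (-1 : ℝ) 1) (hβm : 0 < βm) (hβp : 0 < βp)
    (D : ℝ) (hD : D = βp * (α + 1) + βm * (1 - α))
    (v : ℝ → ℝ) (vm vp dm dp : ℝ)
    (hdiff₁ : ∀ x ∈ Ioo (-1 : ℝ) α, DifferentiableAt ℝ v x ∧ DifferentiableAt ℝ (deriv v) x ∧
        deriv (deriv v) x = 0)
    (hdiff₂ : ∀ x ∈ Ioo α (1 : ℝ), DifferentiableAt ℝ v x ∧ DifferentiableAt ℝ (deriv v) x ∧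
        deriv (deriv v) x = 0)
    (hcont₁ : ContinuousOn v (Ico (-1 : ℝ) α))
    (hcont₂ : ContinuousOn v (Ioc α (1 : ℝ)))
    (hbc₁ : v (-1) = 0) (hbc₂ : v 1 = 0)
    (hvm : Tendsto v (nhdsWithin α (Ioo (-1 : ℝ) α)) (nhds vm))
    (hvp : Tendsto v (nhdsWithin α (Ioo α (1 : ℝ))) (nhds vp))
    (hdm : Tendsto (deriv v) (nhdsWithin α (Ioo (-1 : ℝ) α)) (nhds dm))
    (hdp : Tendsto (deriv v) (nhdsWithin α (Ioo α (1 : ℝ))) (nhds dp))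
    (hflux : βm * dm = βp * dp)
    (hjump : vm - vp = 1) :
    (∀ x ∈ Ico (-1 : ℝ) α, v x = (βp / D) * (x + 1)) ∧
    (∀ x ∈ Ioc α (1 : ℝ), v x = (βm / D) * (x - 1)) :=
  stmt_12_general α βm βp hα hβp D hD v vm vp dm dp hdiff₁ hdiff₂ hcont₁ hcont₂ hbc₁ hbc₂ hvm hvp
    hdm hdp hflux hjump
end
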